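/- arXiv:1609.00715 — 2 statements merged into one kernel-verified Lean document; each statement's English description precedes it below -/
import Mathlib

section
/- Let r ≥ 1 be an integer and p, q nonzero complex numbers with |p| < 1, |q| < 1. Then lim_{z→1} (1 − z) · γ^{(r)}(z, 0; p,q) = 1 / ((p^r;p^r)_∞ (q^r;q^r)_∞). -/
open Complex Finset

noncomputable section

/-- The infinite q-Pochhammer symbol `(z;p)_∞ = ∏_{j≥0} (1 - z p^j)`. -/
def qPochInf (z p : ℂ) : ℂ := ∏' j : ℕ, (1 - z * p ^ j)

/-- The theta function `θ(z;p) = (z;p)_∞ (p z⁻¹; p)_∞`. -/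
def theta0 (z p : ℂ) : ℂ := qPochInf z p * qPochInf (p * z⁻¹) p

/-- The elliptic gamma function `Γ(z;p,q)`. -/
def ellGamma (z p q : ℂ) : ℂ :=
  ∏' jk : ℕ × ℕ,
    (1 - z⁻¹ * p ^ (jk.1 + 1) * q ^ (jk.2 + 1)) / (1 - z * p ^ jk.1 * q ^ jk.2)

/-- The second order elliptic gamma function `Γ(z;p,q,t)`. -/
def ellGamma3 (z p q t : ℂ) : ℂ :=
  ∏' x : ℕ × ℕ × ℕ,
    (1 - z * p ^ x.1 * q ^ x.2.1 * t ^ x.2.2) *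
      (1 - z⁻¹ * p ^ (x.1 + 1) * q ^ (x.2.1 + 1) * t ^ (x.2.2 + 1))

/-- The lens space elliptic gamma function `γ^{(r)}(z,m;p,q)`. -/
def lensGamma (r : ℕ) (z : ℂ) (m : ℤ) (p q : ℂ) : ℂ :=
  ellGamma (z * p ^ m) (p ^ r) (p * q) * ellGamma (z * q ^ ((r : ℤ) - m)) (q ^ r) (p * q)

/-- The rarefied elliptic gamma function `Γ^{(r)}(z,m;p,q)`, built with fixed
square roots σ, τ satisfying `σ² = pq`, `τ² = p/q`, `στ = p`. -/
def rarGamma (r : ℕ) (z : ℂ) (m : ℤ) (p q σ τ : ℂ) : ℂ :=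
  (-z / σ) ^ (m * (m - 1) / 2) * τ ^ (m * (m - 1) * (2 * m - 1) / 6) * lensGamma r z m p q

/-- `w` avoids the pole set `{P^{-j} Q^{-k} : j,k ≥ 0}` of `ellGamma w P Q`. -/
def notPole (w P Q : ℂ) : Prop := ∀ j k : ℕ, w ≠ P ^ (-(j : ℤ)) * Q ^ (-(k : ℤ))

/-- `z` is not a pole of either elliptic gamma factor of `lensGamma r z m p q`. -/
def lensReg (r : ℕ) (z : ℂ) (m : ℤ) (p q : ℂ) : Prop :=
  notPole (z * p ^ m) (p ^ r) (p * q) ∧ notPole (z * q ^ ((r : ℤ) - m)) (q ^ r) (p * q)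

/-!
Write `(z; p, q)_∞ = ∏_{j,k ≥ 0} (1 - z p^j q^k)`. Away from the poles,
`Γ(z; p, q) = (pq/z; p, q)_∞ / (z; p, q)_∞`, and splitting off the row `j = 0` and then its
factor `k = 0` gives `(z; p, q)_∞ = (1 - z) (zq; q)_∞ (zp; p, q)_∞`. So `(1 - z) Γ(z; p, q)` is
continuous at `z = 1` with value
`(pq; p, q)_∞ / ((q; q)_∞ (p; p, q)_∞) = 1 / ((p; p)_∞ (q; q)_∞)`,
splitting off the column `k = 0` of `(p; p, q)_∞`. The second factor of `γ^{(r)}(z, 0; p, q)` is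
continuous at `z = 1` with value `Γ(q^r; q^r, pq) = (pq; pq)_∞ / (q^r; q^r)_∞`, and the factors
`(pq; pq)_∞` cancel. The products are continuous in `z` because they converge locally uniformly.
-/

def doubleQPochInf (z p q : ℂ) : ℂ := ∏' jk : ℕ × ℕ, (1 - z * p ^ jk.1 * q ^ jk.2)

section OneSubProd

variable {ι : Type*} {c : ι → ℂ}

lemma multipliable_one_sub_of_summable_norm (hc : Summable (‖c ·‖)) :
    Multipliable fun i => 1 - c i := by
  simpa only [sub_eq_add_neg] using
    multipliable_one_add_of_summable (f := fun i => -c i) (by simpa only [norm_neg] using hc)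

lemma tprod_one_sub_ne_zero (hc : Summable (‖c ·‖)) (h : ∀ i, ‖c i‖ < 1) :
    ∏' i, (1 - c i) ≠ 0 := by
  simp only [sub_eq_add_neg]
  refine tprod_one_add_ne_zero_of_summable (fun i hi => ?_) (by simpa only [norm_neg] using hc)
  have : c i = 1 := by linear_combination -hi
  simpa [this] using h i

lemma continuous_tprod_one_sub_mul (hc : Summable (‖c ·‖)) :
    Continuous fun z : ℂ => ∏' i, (1 - z * c i) := by
  refine continuous_iff_continuousAt.2 fun z₀ => ?_
  have hbound : ∀ᶠ i in Filter.cofinite, ∀ z ∈ Metric.closedBall z₀ 1,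
      ‖-(z * c i)‖ ≤ (‖z₀‖ + 1) * ‖c i‖ := by
    refine Filter.Eventually.of_forall fun i z hz => ?_
    rw [norm_neg, norm_mul]
    gcongr
    linarith [norm_le_norm_add_norm_sub' z z₀, (mem_closedBall_iff_norm.1 hz)]
  have hunif := (hc.mul_left (‖z₀‖ + 1)).hasProdUniformlyOn_one_add (isCompact_closedBall z₀ 1)
    hbound (fun i => by fun_prop)
  simp only [← sub_eq_add_neg] at hunif
  refine ((hasProdUniformlyOn_iff_tendstoUniformlyOn.1 hunif).continuousOn
    (Filter.Frequently.of_forall fun s => by fun_prop)).continuousAt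
    (Metric.closedBall_mem_nhds z₀ one_pos)

end OneSubProd

section Pochhammer

variable {z p q : ℂ}

lemma norm_mul_lt_one (hp : ‖p‖ < 1) (hq : ‖q‖ < 1) : ‖p * q‖ < 1 := by
  rw [norm_mul]
  exact mul_lt_one_of_nonneg_of_lt_one_left (norm_nonneg p) hp hq.le

lemma summable_norm_pow (hp : ‖p‖ < 1) : Summable fun j : ℕ => ‖p ^ j‖ := by
  simpa only [norm_pow] using summable_geometric_of_lt_one (norm_nonneg p) hp

lemma summable_norm_pow_mul_pow (hp : ‖p‖ < 1) (hq : ‖q‖ < 1) :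
    Summable fun jk : ℕ × ℕ => ‖p ^ jk.1 * q ^ jk.2‖ :=
  Summable.mul_norm (summable_norm_pow hp) (summable_norm_pow hq)

lemma multipliable_qPochInf (z : ℂ) (hp : ‖p‖ < 1) : Multipliable fun j : ℕ => 1 - z * p ^ j :=
  multipliable_one_sub_of_summable_norm <| by
    simpa only [norm_mul] using (summable_norm_pow hp).mul_left ‖z‖

lemma multipliable_doubleQPochInf (z : ℂ) (hp : ‖p‖ < 1) (hq : ‖q‖ < 1) :
    Multipliable fun jk : ℕ × ℕ => 1 - z * p ^ jk.1 * q ^ jk.2 :=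
  multipliable_one_sub_of_summable_norm <| by
    simpa only [mul_assoc, norm_mul z] using (summable_norm_pow_mul_pow hp hq).mul_left ‖z‖

lemma continuous_qPochInf (hp : ‖p‖ < 1) : Continuous fun z => qPochInf z p :=
  continuous_tprod_one_sub_mul (summable_norm_pow hp)

lemma continuous_doubleQPochInf (hp : ‖p‖ < 1) (hq : ‖q‖ < 1) :
    Continuous fun z => doubleQPochInf z p q := by
  simpa only [doubleQPochInf, mul_assoc] using
    continuous_tprod_one_sub_mul (summable_norm_pow_mul_pow hp hq)

lemma qPochInf_ne_zero (hp : ‖p‖ < 1) (hz : ‖z‖ < 1) : qPochInf z p ≠ 0 := by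
  refine tprod_one_sub_ne_zero (by simpa only [norm_mul] using
    (summable_norm_pow hp).mul_left ‖z‖) fun j => ?_
  rw [norm_mul, norm_pow]
  exact mul_lt_one_of_nonneg_of_lt_one_left (norm_nonneg z) hz
    (pow_le_one₀ (norm_nonneg p) hp.le)

lemma doubleQPochInf_ne_zero (hp : ‖p‖ < 1) (hq : ‖q‖ < 1) (hz : ‖z‖ < 1) :
    doubleQPochInf z p q ≠ 0 := by
  refine tprod_one_sub_ne_zero (by simpa only [mul_assoc, norm_mul z] using
    (summable_norm_pow_mul_pow hp hq).mul_left ‖z‖) fun jk => ?_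
  rw [norm_mul, norm_mul, norm_pow, norm_pow, mul_assoc]
  exact mul_lt_one_of_nonneg_of_lt_one_left (norm_nonneg z) hz
    (mul_le_one₀ (pow_le_one₀ (norm_nonneg p) hp.le) (by positivity)
      (pow_le_one₀ (norm_nonneg q) hq.le))

lemma qPochInf_eq_one_sub_mul (hp : ‖p‖ < 1) : qPochInf z p = (1 - z) * qPochInf (z * p) p := by
  have h : HasProd (fun j => 1 - z * p ^ (j + 1)) (qPochInf (z * p) p) := by
    simpa only [qPochInf, pow_succ', mul_assoc] using (multipliable_qPochInf (z * p) hp).hasProd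
  rw [qPochInf]
  simpa using (h.prod_range_mul (f := fun j => 1 - z * p ^ j) (k := 1)).tprod_eq

lemma hasProd_qPochInf_doubleQPochInf (hp : ‖p‖ < 1) (hq : ‖q‖ < 1) :
    HasProd (fun j => qPochInf (z * p ^ j) q) (doubleQPochInf z p q) :=
  (multipliable_doubleQPochInf z hp hq).hasProd.prod_fiberwise fun j =>
    (multipliable_qPochInf (z * p ^ j) hq).hasProd

lemma doubleQPochInf_eq_qPochInf_mul (hp : ‖p‖ < 1) (hq : ‖q‖ < 1) :
    doubleQPochInf z p q = qPochInf z q * doubleQPochInf (z * p) p q := by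
  have h : HasProd (fun j => qPochInf (z * p ^ (j + 1)) q) (doubleQPochInf (z * p) p q) := by
    simpa only [pow_succ', mul_assoc] using hasProd_qPochInf_doubleQPochInf (z := z * p) hp hq
  simpa using (hasProd_qPochInf_doubleQPochInf hp hq).unique
    (h.prod_range_mul (f := fun j => qPochInf (z * p ^ j) q) (k := 1))

lemma doubleQPochInf_comm : doubleQPochInf z p q = doubleQPochInf z q p := by
  rw [doubleQPochInf, ← (Equiv.prodComm ℕ ℕ).tprod_eq, doubleQPochInf]
  exact tprod_congr fun jk => by
    simp only [Equiv.prodComm_apply, Prod.fst_swap, Prod.snd_swap, mul_right_comm]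

lemma doubleQPochInf_eq_qPochInf_mul' (hp : ‖p‖ < 1) (hq : ‖q‖ < 1) :
    doubleQPochInf z p q = qPochInf z p * doubleQPochInf (z * q) p q := by
  rw [doubleQPochInf_comm, doubleQPochInf_eq_qPochInf_mul hq hp, doubleQPochInf_comm]

end Pochhammer

section EllipticGamma

open Filter Topology

variable {z p q : ℂ}

lemma ellGamma_eq_div (hp : ‖p‖ < 1) (hq : ‖q‖ < 1) (h : doubleQPochInf z p q ≠ 0) :
    ellGamma z p q = doubleQPochInf (p * q * z⁻¹) p q / doubleQPochInf z p q := by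
  rw [ellGamma, doubleQPochInf, doubleQPochInf, ← Multipliable.tprod_div₀
    (multipliable_doubleQPochInf _ hp hq) (multipliable_doubleQPochInf z hp hq) h]
  exact tprod_congr fun jk => by ring

lemma tendsto_one_sub_mul_ellGamma (hp : ‖p‖ < 1) (hq : ‖q‖ < 1) :
    Tendsto (fun z => (1 - z) * ellGamma z p q) (𝓝[≠] 1)
      (𝓝 (1 / (qPochInf p p * qPochInf q q))) := by
  set D : ℂ → ℂ := fun z => qPochInf (z * q) q * doubleQPochInf (z * p) p q
  have hD : ContinuousAt D 1 :=
    (((continuous_qPochInf hq).comp (continuous_mul_const q)).mul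
      ((continuous_doubleQPochInf hp hq).comp (continuous_mul_const p))).continuousAt
  have hD1 : D 1 ≠ 0 := by
    simpa [D] using mul_ne_zero (qPochInf_ne_zero hq hq) (doubleQPochInf_ne_zero hp hq hp)
  have hN : ContinuousAt (fun z => doubleQPochInf (p * q * z⁻¹) p q) 1 :=
    (continuous_doubleQPochInf hp hq).continuousAt.comp
      (continuousAt_const.mul (continuousAt_inv₀ one_ne_zero))
  have hlim : (fun z => doubleQPochInf (p * q * z⁻¹) p q / D z) 1 =
      1 / (qPochInf p p * qPochInf q q) := by
    simp only [D, inv_one, mul_one, one_mul]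
    rw [doubleQPochInf_eq_qPochInf_mul' (z := p) hp hq]
    field_simp [doubleQPochInf_ne_zero hp hq (norm_mul_lt_one hp hq)]
  refine hlim ▸ ((hN.div hD hD1).tendsto.mono_left nhdsWithin_le_nhds).congr' ?_
  filter_upwards [nhdsWithin_le_nhds (hD.eventually_ne hD1), self_mem_nhdsWithin]
    with z hDz hz1
  have hsplit : doubleQPochInf z p q = (1 - z) * D z := by
    rw [doubleQPochInf_eq_qPochInf_mul hp hq, qPochInf_eq_one_sub_mul hq, mul_assoc]
  have hz : 1 - z ≠ 0 := sub_ne_zero.2 (Ne.symm hz1)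
  rw [ellGamma_eq_div hp hq (hsplit ▸ mul_ne_zero hz hDz), hsplit, Pi.div_apply]
  field_simp

lemma tendsto_ellGamma_mul_self (hp0 : p ≠ 0) (hp : ‖p‖ < 1) (hq : ‖q‖ < 1) :
    Tendsto (fun z => ellGamma (z * p) p q) (𝓝 1) (𝓝 (qPochInf q q / qPochInf p p)) := by
  set D : ℂ → ℂ := fun z => doubleQPochInf (z * p) p q
  have hD : ContinuousAt D 1 :=
    ((continuous_doubleQPochInf hp hq).comp (continuous_mul_const p)).continuousAt
  have hD1 : D 1 ≠ 0 := by simpa [D] using doubleQPochInf_ne_zero hp hq hp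
  have hN : ContinuousAt (fun z => doubleQPochInf (q * z⁻¹) p q) 1 :=
    (continuous_doubleQPochInf hp hq).continuousAt.comp
      (continuousAt_const.mul (continuousAt_inv₀ one_ne_zero))
  have hlim : (fun z => doubleQPochInf (q * z⁻¹) p q / D z) 1 = qPochInf q q / qPochInf p p := by
    simp only [D, inv_one, mul_one, one_mul]
    rw [doubleQPochInf_eq_qPochInf_mul (z := q) hp hq,
      doubleQPochInf_eq_qPochInf_mul' (z := p) hp hq, mul_comm q p]
    field_simp [doubleQPochInf_ne_zero hp hq (norm_mul_lt_one hp hq)]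
  refine hlim ▸ (hN.div hD hD1).tendsto.congr' ?_
  filter_upwards [hD.eventually_ne hD1] with z hDz
  rw [ellGamma_eq_div hp hq hDz, Pi.div_apply]
  congr 2
  field_simp

end EllipticGamma

theorem lensGamma_residue_limit_general
    (r : ℕ) (hr : 1 ≤ r) (p q : ℂ) (hq : q ≠ 0)
    (hp1 : ‖p‖ < 1) (hq1 : ‖q‖ < 1) :
    Filter.Tendsto (fun z : ℂ => (1 - z) * lensGamma r z 0 p q)
      (nhdsWithin 1 {(1 : ℂ)}ᶜ)
      (nhds (1 / (qPochInf (p ^ r) (p ^ r) * qPochInf (q ^ r) (q ^ r)))) := by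
  have hpow : ∀ x : ℂ, ‖x‖ < 1 → ‖x ^ r‖ < 1 := fun x hx => by
    rw [norm_pow]; exact pow_lt_one₀ (norm_nonneg x) hx (by omega)
  have hpq := norm_mul_lt_one hp1 hq1
  have hlens : ∀ z, (1 - z) * lensGamma r z 0 p q =
      (1 - z) * ellGamma z (p ^ r) (p * q) * ellGamma (z * q ^ r) (q ^ r) (p * q) := fun z => by
    simp [lensGamma, mul_assoc]
  simp only [hlens]
  have hsecond := (tendsto_ellGamma_mul_self (pow_ne_zero r hq) (hpow q hq1) hpq).mono_left
    (nhdsWithin_le_nhds (s := {1}ᶜ))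
  convert (tendsto_one_sub_mul_ellGamma (hpow p hp1) hpq).mul hsecond using 2
  field_simp [qPochInf_ne_zero hpq hpq]

/-- The residue-type limit `lim_{z→1} (1−z) γ^{(r)}(z,0;p,q) = 1/((p^r;p^r)_∞ (q^r;q^r)_∞)`
(formula (3.17) of the paper). -/
theorem lensGamma_residue_limit
    (r : ℕ) (hr : 1 ≤ r) (p q : ℂ) (hp : p ≠ 0) (hq : q ≠ 0)
    (hp1 : ‖p‖ < 1) (hq1 : ‖q‖ < 1) :
    Filter.Tendsto (fun z : ℂ => (1 - z) * lensGamma r z 0 p q)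
      (nhdsWithin 1 {(1 : ℂ)}ᶜ)
      (nhds (1 / (qPochInf (p ^ r) (p ^ r) * qPochInf (q ^ r) (q ^ r)))) :=
  lensGamma_residue_limit_general r hr p q hq hp1 hq1
end
end

section
/- Let r ≥ 1 be an integer, p, q nonzero complex numbers with |p| < 1, |q| < 1, and m ∈ ℤ. For every nonzero z ∈ ℂ not a pole of the functions involved, γ^{(r)}(qz, m+1; p,q) = θ(z p^m; p^r) · γ^{(r)}(z, m; p,q) and γ^{(r)}(pz, m−1; p,q) = θ(z q^{r−m}; q^r) · γ^{(r)}(z, m; p,q). -/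
open Complex Finset

noncomputable section

/-!
Off its poles, `Γ(w;P,Q) = (w⁻¹PQ;P,Q)_∞ / (w;P,Q)_∞` with a nonvanishing denominator, where
`(c;P,Q)_∞ = ∏_{j,k} (1 - c P^j Q^k)` is the double Pochhammer symbol. Splitting off the row `k = 0`
gives `(c;P,Q)_∞ = (c;P)_∞ (cQ;P,Q)_∞`; applied to the numerator and the denominator of `Γ(wQ;P,Q)`
this yields `Γ(wQ;P,Q) = θ(w;P) Γ(w;P,Q)`. Both recurrences are instances of this identity, for
`(P,Q) = (p^r, pq)` and `(q^r, pq)`: the substitutions shift `z p^m`, resp. `z q^(r-m)`, by `pq`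
and leave the other factor of `γ^(r)` unchanged.
-/

def doublePoch (c P Q : ℂ) : ℂ := ∏' jk : ℕ × ℕ, (1 - c * P ^ jk.1 * Q ^ jk.2)

lemma multipliable_one_sub_of_summable {ι : Type*} {u : ι → ℂ}
    (hu : Summable fun i => ‖u i‖) : Multipliable fun i => 1 - u i := by
  simpa [sub_eq_add_neg] using multipliable_one_add_of_summable (f := fun i => -u i) (by simpa)

lemma tprod_one_sub_ne_zero_of_summable {ι : Type*} {u : ι → ℂ}
    (hu : Summable fun i => ‖u i‖) (h : ∀ i, u i ≠ 1) : ∏' i, (1 - u i) ≠ 0 := by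
  simpa [sub_eq_add_neg] using tprod_one_add_ne_zero_of_summable (f := fun i => -u i)
    (fun i => by simpa [← sub_eq_add_neg, sub_eq_zero] using (h i).symm) (by simpa)

lemma tprod_one_sub_prod_nat_eq_mul {u : ℕ × ℕ → ℂ} (hu : Summable fun jk => ‖u jk‖) :
    ∏' jk, (1 - u jk) = (∏' j, (1 - u (j, 0))) * ∏' jk : ℕ × ℕ, (1 - u (jk.1, jk.2 + 1)) := by
  have hsub {κ : Type} {g : κ → ℕ × ℕ} (hg : g.Injective) : Multipliable fun x => 1 - u (g x) :=
    multipliable_one_sub_of_summable (hu.comp_injective hg)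
  have hshift : (fun jk : ℕ × ℕ => (jk.1, jk.2 + 1)).Injective := fun a b h => by
    simp only [Prod.mk.injEq, add_left_inj] at h; exact Prod.ext h.1 h.2
  have hrow (j : ℕ) : (Prod.mk j : ℕ → ℕ × ℕ).Injective := Prod.mk_right_injective j
  have hrowSucc (j : ℕ) : Multipliable fun k => 1 - u (j, k + 1) :=
    hsub ((hrow j).comp (add_left_injective 1))
  rw [(multipliable_one_sub_of_summable hu).tprod_prod' fun j => hsub (hrow j),
    (hsub hshift).tprod_prod' hrowSucc,
    ← (hsub fun _ _ h => (Prod.ext_iff.1 h).1).tprod_mul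
      ⟨_, (hsub hshift).hasProd.prod_fiberwise fun j => (hrowSucc j).hasProd⟩]
  exact tprod_congr fun j => tprod_eq_zero_mul' (hrowSucc j)

section DoublePoch

variable {P Q : ℂ} (hP : ‖P‖ < 1) (hQ : ‖Q‖ < 1)
include hP hQ

lemma summable_norm_mul_pow_mul_pow (c : ℂ) :
    Summable fun jk : ℕ × ℕ => ‖c * P ^ jk.1 * Q ^ jk.2‖ := by
  have h := ((summable_geometric_of_lt_one (norm_nonneg P) hP).mul_left ‖c‖).mul_of_nonneg
    (summable_geometric_of_lt_one (norm_nonneg Q) hQ) (fun _ => by positivity)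
    (fun _ => by positivity)
  exact h.congr fun jk => by simp [norm_pow]

lemma doublePoch_eq_qPochInf_mul (c : ℂ) :
    doublePoch c P Q = qPochInf c P * doublePoch (c * Q) P Q := by
  rw [doublePoch, tprod_one_sub_prod_nat_eq_mul (summable_norm_mul_pow_mul_pow hP hQ c)]
  congr 1
  · simp [qPochInf]
  · exact tprod_congr fun jk => by ring

lemma doublePoch_ne_zero {c : ℂ} (hc : ∀ j k : ℕ, c * P ^ j * Q ^ k ≠ 1) :
    doublePoch c P Q ≠ 0 :=
  tprod_one_sub_ne_zero_of_summable (summable_norm_mul_pow_mul_pow hP hQ c) fun jk => hc jk.1 jk.2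

lemma ellGamma_eq_div_s17 {w : ℂ} (hw : ∀ j k : ℕ, w * P ^ j * Q ^ k ≠ 1) :
    ellGamma w P Q = doublePoch (w⁻¹ * P * Q) P Q / doublePoch w P Q := by
  rw [doublePoch, doublePoch, ← Multipliable.tprod_div₀
    (multipliable_one_sub_of_summable (summable_norm_mul_pow_mul_pow hP hQ _))
    (multipliable_one_sub_of_summable (summable_norm_mul_pow_mul_pow hP hQ _))
    (doublePoch_ne_zero hP hQ hw)]
  exact tprod_congr fun jk => by ring

lemma ellGamma_mul_eq_theta0_mul (hQ0 : Q ≠ 0) {w : ℂ}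
    (hw : ∀ j k : ℕ, w * P ^ j * Q ^ k ≠ 1) :
    ellGamma (w * Q) P Q = theta0 w P * ellGamma w P Q := by
  have hwQ (j k : ℕ) : w * Q * P ^ j * Q ^ k ≠ 1 := by
    simpa [pow_succ, mul_assoc, mul_comm, mul_left_comm] using hw j (k + 1)
  have hsplit := doublePoch_eq_qPochInf_mul hP hQ w
  have hD := doublePoch_ne_zero hP hQ hw
  rw [hsplit, mul_ne_zero_iff] at hD
  rw [ellGamma_eq_div_s17 hP hQ hwQ, ellGamma_eq_div_s17 hP hQ hw, hsplit, theta0,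
    doublePoch_eq_qPochInf_mul hP hQ ((w * Q)⁻¹ * P * Q),
    show (w * Q)⁻¹ * P * Q = P * w⁻¹ by field_simp]
  field_simp [hD.1, hD.2]

end DoublePoch

lemma notPole.mul_pow_mul_pow_ne_one {w P Q : ℂ} (h : notPole w P Q) (hP : P ≠ 0) (hQ : Q ≠ 0)
    (j k : ℕ) : w * P ^ j * Q ^ k ≠ 1 := by
  intro hwjk
  apply h j k
  rw [zpow_neg, zpow_neg, zpow_natCast, zpow_natCast]
  field_simp
  linear_combination hwjk

theorem lensGamma_recurrences_general
    (r : ℕ) (hr : 1 ≤ r) (p q : ℂ) (hp : p ≠ 0) (hq : q ≠ 0)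
    (hp1 : ‖p‖ < 1) (hq1 : ‖q‖ < 1)
    (m : ℤ) (z : ℂ)
    (hreg : lensReg r z m p q) :
    lensGamma r (q * z) (m + 1) p q =
        theta0 (z * p ^ m) (p ^ r) * lensGamma r z m p q ∧
      lensGamma r (p * z) (m - 1) p q =
        theta0 (z * q ^ ((r : ℤ) - m)) (q ^ r) * lensGamma r z m p q := by
  have hpq : ‖p * q‖ < 1 := by
    rw [norm_mul]; exact mul_lt_one_of_nonneg_of_lt_one_left (norm_nonneg p) hp1 hq1.le
  have hpr : ‖p ^ r‖ < 1 := by rw [norm_pow]; exact pow_lt_one₀ (norm_nonneg p) hp1 (by omega)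
  have hqr : ‖q ^ r‖ < 1 := by rw [norm_pow]; exact pow_lt_one₀ (norm_nonneg q) hq1 (by omega)
  have hpq0 := mul_ne_zero hp hq
  constructor
  · rw [lensGamma, lensGamma,
      show q * z * p ^ (m + 1) = z * p ^ m * (p * q) by rw [zpow_add_one₀ hp]; ring,
      show q * z * q ^ ((r : ℤ) - (m + 1)) = z * q ^ ((r : ℤ) - m) by
        rw [sub_add_eq_sub_sub, zpow_sub_one₀ hq]; field_simp,
      ellGamma_mul_eq_theta0_mul hpr hpq hpq0
        (hreg.1.mul_pow_mul_pow_ne_one (pow_ne_zero r hp) hpq0)]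
    ring
  · rw [lensGamma, lensGamma,
      show p * z * p ^ (m - 1) = z * p ^ m by rw [zpow_sub_one₀ hp]; field_simp,
      show p * z * q ^ ((r : ℤ) - (m - 1)) = z * q ^ ((r : ℤ) - m) * (p * q) by
        rw [sub_sub_eq_add_sub, add_sub_right_comm, zpow_add_one₀ hq]; ring,
      ellGamma_mul_eq_theta0_mul hqr hpq hpq0
        (hreg.2.mul_pow_mul_pow_ne_one (pow_ne_zero r hq) hpq0)]
    ring

/-- The elementary recurrence relations (3.12) for the lens-space elliptic gamma
function: `γ^{(r)}(qz,m+1) = θ(z p^m; p^r) γ^{(r)}(z,m)` and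
`γ^{(r)}(pz,m−1) = θ(z q^{r−m}; q^r) γ^{(r)}(z,m)`. -/
theorem lensGamma_recurrences
    (r : ℕ) (hr : 1 ≤ r) (p q : ℂ) (hp : p ≠ 0) (hq : q ≠ 0)
    (hp1 : ‖p‖ < 1) (hq1 : ‖q‖ < 1)
    (m : ℤ) (z : ℂ) (hz : z ≠ 0)
    (hreg : lensReg r z m p q)
    (hregq : lensReg r (q * z) (m + 1) p q)
    (hregp : lensReg r (p * z) (m - 1) p q) :
    lensGamma r (q * z) (m + 1) p q =
        theta0 (z * p ^ m) (p ^ r) * lensGamma r z m p q ∧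
      lensGamma r (p * z) (m - 1) p q =
        theta0 (z * q ^ ((r : ℤ) - m)) (q ^ r) * lensGamma r z m p q :=
  lensGamma_recurrences_general r hr p q hp hq hp1 hq1 m z hreg
end
end
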